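/- Let X be an n-point metric space (n ≥ 2) in which the distance between any two distinct points is 1 or 2. Then X embeds into n-dimensional Euclidean space ℝ^n (equivalently, into ℓ_2) with distortion at most 2·√((n−1)/n); that is, there exist f : X → ℝ^n and r > 0 such that r·d(x,y) ≤ ‖f(x) − f(y)‖_2 ≤ 2·√((n−1)/n)·r·d(x,y) for all x,y ∈ X. -/

import Mathlib

/-!
Put `G x x = 1/2` and `G x y = (1 - d(x,y)) / (2(n-1))` for `x ≠ y`. When all distances are at
most `2`, every off-diagonal row sum of `|G|` is at most `1/2`, so `G` is diagonally dominant,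
hence positive semidefinite by Gershgorin, hence the Gram matrix of some vectors `u x ∈ ℝⁿ`.
These satisfy `‖u x - u y‖² = 1 + (d(x,y) - 1)/(n - 1)`, which is `1` at distance `1` and
`n/(n-1)` at distance `2`; for distances in `[1, 2]` this squared length lies between
`d² n / (4(n-1))` and `d²`, which is distortion `2√((n-1)/n)`.
-/

open Finset

namespace Matrix

variable {ι : Type*} [Fintype ι] [DecidableEq ι]

theorem posSemidef_of_sum_row_le_diag {A : Matrix ι ι ℝ} (hA : A.IsHermitian)
    (h : ∀ k, ∑ j ∈ univ.erase k, |A k j| ≤ A k k) : A.PosSemidef := by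
  refine hA.posSemidef_iff_eigenvalues_nonneg.mpr fun i => ?_
  have hμ : Module.End.HasEigenvalue A.toLin' (hA.eigenvalues i) := by
    rw [Module.End.hasEigenvalue_iff_mem_spectrum, spectrum_toLin']
    exact hA.eigenvalues_mem_spectrum_real i
  obtain ⟨k, hk⟩ := eigenvalue_mem_ball hμ
  have hk' : A k k - hA.eigenvalues i ≤ ∑ j ∈ univ.erase k, |A k j| :=
    (le_abs_self _).trans (by simpa [Real.dist_eq, abs_sub_comm] using hk)
  linarith [h k, show (0 : ι → ℝ) i = 0 from rfl]

open scoped MatrixOrder in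
theorem PosSemidef.exists_gram_eq {G : Matrix ι ι ℝ} (hG : G.PosSemidef) :
    ∃ u : ι → EuclideanSpace ℝ ι, gram ℝ u = G := by
  set S := CFC.sqrt G
  have hS : S.IsHermitian := (nonneg_iff_posSemidef.mp (CFC.sqrt_nonneg G)).isHermitian
  have hSS : S * S = G := CFC.sqrt_mul_sqrt_self G hG.nonneg
  refine ⟨fun i => WithLp.toLp 2 (S i), ?_⟩
  ext i j
  rw [gram_apply, EuclideanSpace.inner_toLp_toLp, ← hSS, mul_apply]
  simp only [dotProduct, star_trivial, ← hS.apply j, mul_comm]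

end Matrix

open Matrix

theorem div_le_sqrt_one_add_div_and_le {n d : ℝ} (hn : 2 ≤ n) (hd₁ : 1 ≤ d) (hd₂ : d ≤ 2) :
    d / (2 * √((n - 1) / n)) ≤ √(1 + (d - 1) / (n - 1)) ∧ √(1 + (d - 1) / (n - 1)) ≤ d := by
  have hn₁ : 0 < n - 1 := by linarith
  have hq : 0 ≤ (d - 1) / (n - 1) := div_nonneg (by linarith) hn₁.le
  constructor
  · rw [Real.le_sqrt (by positivity) (by linarith), div_pow, mul_pow, Real.sq_sqrt (by positivity),
      div_le_iff₀ (by positivity)]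
    field_simp
    nlinarith [mul_nonneg (sub_nonneg.2 hd₂) (by nlinarith : 0 ≤ n * (d + 2) - 4)]
  · rw [Real.sqrt_le_iff]
    refine ⟨by linarith, ?_⟩
    have hdiv : (d - 1) / (n - 1) ≤ d - 1 := div_le_self (by linarith) (by linarith)
    nlinarith

noncomputable def distGram (X : Type*) [PseudoMetricSpace X] [Fintype X] [DecidableEq X] :
    Matrix X X ℝ :=
  of fun x y => if x = y then 1 / 2 else (1 - dist x y) / ((Fintype.card X : ℝ) - 1) / 2

section distGram

variable {X : Type*} [PseudoMetricSpace X] [Fintype X] [DecidableEq X]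

theorem isHermitian_distGram : (distGram X).IsHermitian := by
  ext x y
  simp only [conjTranspose_apply, star_trivial, distGram, of_apply, eq_comm (a := x), dist_comm]

theorem sum_abs_distGram_offDiag_le (h : ∀ x y : X, dist x y ≤ 2) (x : X) :
    ∑ y ∈ univ.erase x, |distGram X x y| ≤ distGram X x x := by
  have hcard : (1 : ℝ) ≤ Fintype.card X := by exact_mod_cast Fintype.card_pos_iff.mpr ⟨x⟩
  have hterm : ∀ y ∈ univ.erase x,
      |distGram X x y| ≤ 1 / ((Fintype.card X : ℝ) - 1) / 2 := by
    intro y hy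
    rw [distGram, of_apply, if_neg (ne_of_mem_erase hy).symm, abs_div, abs_div, abs_two,
      abs_of_nonneg (by linarith : 0 ≤ (Fintype.card X : ℝ) - 1)]
    gcongr
    exact abs_le.mpr ⟨by linarith [h x y], by linarith [dist_nonneg (x := x) (y := y)]⟩
  calc ∑ y ∈ univ.erase x, |distGram X x y|
      ≤ ∑ y ∈ univ.erase x, 1 / ((Fintype.card X : ℝ) - 1) / 2 := sum_le_sum hterm
    _ = ((Fintype.card X : ℝ) - 1) / ((Fintype.card X : ℝ) - 1) / 2 := by
      rw [sum_const, card_erase_of_mem (mem_univ x), card_univ, nsmul_eq_mul,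
        Nat.cast_sub (by exact_mod_cast hcard), Nat.cast_one, mul_div_assoc', mul_one_div]
    _ ≤ 1 / 2 := by gcongr; exact div_self_le_one _
    _ = distGram X x x := by simp [distGram]

theorem posSemidef_distGram (h : ∀ x y : X, dist x y ≤ 2) : (distGram X).PosSemidef :=
  posSemidef_of_sum_row_le_diag isHermitian_distGram (sum_abs_distGram_offDiag_le h)

theorem dist_eq_of_gram_eq_distGram {E : Type*} [NormedAddCommGroup E] [InnerProductSpace ℝ E]
    {u : X → E} (hu : gram ℝ u = distGram X) {x y : X} (hxy : x ≠ y) :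
    dist (u x) (u y) = √(1 + (dist x y - 1) / ((Fintype.card X : ℝ) - 1)) := by
  have hG : ∀ a b, inner ℝ (u a) (u b) = distGram X a b := fun a b => by rw [← hu, gram_apply]
  rw [dist_eq_norm, ← Real.sqrt_sq (norm_nonneg _), norm_sub_sq_real, ← real_inner_self_eq_norm_sq,
    ← real_inner_self_eq_norm_sq, hG, hG, hG]
  simp only [distGram, of_apply, if_pos, if_neg hxy]
  congr 1
  ring

end distGram

theorem exists_euclidean_embedding_of_dist_mem_Icc {X : Type*} [PseudoMetricSpace X] [Fintype X]
    (hcard : 2 ≤ Fintype.card X) (h : ∀ x y : X, x ≠ y → dist x y ∈ Set.Icc 1 2) :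
    ∃ u : X → EuclideanSpace ℝ X, ∀ x y,
      dist x y / (2 * √(((Fintype.card X : ℝ) - 1) / Fintype.card X)) ≤ dist (u x) (u y) ∧
        dist (u x) (u y) ≤ dist x y := by
  classical
  have hle : ∀ x y : X, dist x y ≤ 2 := fun x y => by
    by_cases hxy : x = y
    · simp [hxy]
    · exact (h x y hxy).2
  obtain ⟨u, hu⟩ := (posSemidef_distGram hle).exists_gram_eq
  refine ⟨u, fun x y => ?_⟩
  by_cases hxy : x = y
  · simp [hxy]
  rw [dist_eq_of_gram_eq_distGram hu hxy]
  exact div_le_sqrt_one_add_div_and_le (by exact_mod_cast hcard) (h x y hxy).1 (h x y hxy).2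

theorem stmt11 {X : Type*} [MetricSpace X] [Fintype X] (n : ℕ) (hn : 2 ≤ n)
    (hcard : Fintype.card X = n)
    (h12 : ∀ x y : X, x ≠ y → dist x y = 1 ∨ dist x y = 2) :
    ∃ (f : X → EuclideanSpace ℝ (Fin n)) (r : ℝ), 0 < r ∧
      ∀ x y : X, r * dist x y ≤ dist (f x) (f y) ∧
        dist (f x) (f y) ≤ 2 * Real.sqrt (((n : ℝ) - 1) / n) * r * dist x y := by
  obtain ⟨u, hu⟩ := exists_euclidean_embedding_of_dist_mem_Icc (hcard ▸ hn) fun x y hxy => by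
    rcases h12 x y hxy with h | h <;> norm_num [h]
  have hα : 0 < 2 * √(((n : ℝ) - 1) / n) := by
    have hn' : (2 : ℝ) ≤ n := by exact_mod_cast hn
    exact mul_pos two_pos (Real.sqrt_pos.mpr (div_pos (by linarith) (by linarith)))
  let φ := LinearIsometryEquiv.piLpCongrLeft 2 ℝ ℝ (Fintype.equivFinOfCardEq hcard)
  refine ⟨φ ∘ u, 1 / (2 * √(((n : ℝ) - 1) / n)), one_div_pos.mpr hα, fun x y => ?_⟩
  rw [mul_one_div_cancel hα.ne', one_mul, one_div_mul_eq_div, Function.comp_apply,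
    Function.comp_apply, φ.dist_map, ← hcard]
  exact hu x y
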